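/- arXiv:1612.00191 — 2 statements merged into one kernel-verified Lean document; each statement's English description precedes it below -/
import Mathlib

section
/- Let W = {([x₀:x₁:x₂],[y₀:y₁:y₂]) ∈ ℙ²(ℝ)×ℙ²(ℝ) : x₀y₀ = x₁y₁ = x₂y₂}. The maps α₁(x,y) = ([y₂:y₀:y₁],[x₂:x₀:x₁]) and α₂(x,y) = ([x₁:x₀:x₂],[y₁:y₀:y₂]) are well-defined bijections of W; α₁ has order exactly 6, α₂ has order exactly 2, (α₁α₂)² = id, and the subgroup of the symmetric group of W generated by α₁ and α₂ is isomorphic to the dihedral group D₆ of order 12. -/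
/-!
Write `σ` for the exchange of the two factors of `ℙ² × ℙ²`, and `γ`, `τ` for the simultaneous
cyclic shift and transposition of the coordinates of both factors. All three preserve `W`, since
they only permute the three products `xᵢyᵢ`. Then `α₁ = σγ` and `α₂ = τ`. Since `σ` commutes with
`γ` and `τ`, `σ² = τ² = γ³ = (γτ)² = 1`, and none of `σ, γ, τ` is the identity, `α₁` has order
`2 · 3 = 6` and `(α₁α₂)² = σ²(γτ)² = 1`. An element `a` of order `n > 2` and an involution `b`
with `(ab)² = 1` always generate a copy of `D_n`: `b` inverts `a`, so `b ∉ ⟨a⟩` (otherwise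
`a² = 1`), and `r i ↦ aⁱ`, `sr i ↦ b aⁱ` is an injective homomorphism onto `⟨a, b⟩`.
-/

/-- The real del Pezzo surface of degree 6:
`W = {([x₀:x₁:x₂],[y₀:y₁:y₂]) ∈ ℙ² × ℙ² : x₀y₀ = x₁y₁ = x₂y₂}`. -/
def W6 : Set (Projectivization ℝ (Fin 3 → ℝ) × Projectivization ℝ (Fin 3 → ℝ)) :=
  {P | ∃ (x₀ x₁ x₂ y₀ y₁ y₂ : ℝ) (hx : (![x₀, x₁, x₂] : Fin 3 → ℝ) ≠ 0)
      (hy : (![y₀, y₁, y₂] : Fin 3 → ℝ) ≠ 0),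
      P.1 = Projectivization.mk ℝ ![x₀, x₁, x₂] hx ∧
      P.2 = Projectivization.mk ℝ ![y₀, y₁, y₂] hy ∧
      x₀ * y₀ = x₁ * y₁ ∧ x₁ * y₁ = x₂ * y₂}

section DihedralPresentation

variable {G : Type*} [Group G] {a b : G} {n : ℕ}

lemma pow_val_add_of_pow_eq_one [NeZero n] (ha : a ^ n = 1) (i j : ZMod n) :
    a ^ (i + j).val = a ^ i.val * a ^ j.val := by
  rw [ZMod.val_add, ← pow_eq_pow_mod _ ha, pow_add]

lemma pow_val_sub_of_pow_eq_one [NeZero n] (ha : a ^ n = 1) (i j : ZMod n) :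
    a ^ (j - i).val = (a ^ i.val)⁻¹ * a ^ j.val := by
  rw [eq_inv_mul_iff_mul_eq, ← pow_val_add_of_pow_eq_one ha, add_sub_cancel]

lemma pow_mul_eq_mul_inv_pow (hb : b ^ 2 = 1) (hab : (a * b) ^ 2 = 1) (k : ℕ) :
    a ^ k * b = b * (a ^ k)⁻¹ := by
  have hbb : b * b = 1 := pow_two b ▸ hb
  have hbinv : b⁻¹ = b := inv_eq_of_mul_eq_one_right hbb
  have hconj : b * a * b⁻¹ = a⁻¹ := by
    rw [hbinv]
    refine eq_inv_of_mul_eq_one_left ?_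
    calc b * a * b * a = b * (a * b) ^ 2 * b⁻¹ := by rw [pow_two]; group
      _ = 1 := by rw [hab]; group
  calc a ^ k * b = b * (b * a ^ k * b⁻¹) := by
        rw [hbinv, ← mul_assoc, ← mul_assoc, hbb, one_mul]
    _ = b * (a ^ k)⁻¹ := by rw [← conj_pow, hconj, inv_pow]

def dihedralGroupHom [NeZero n] (ha : a ^ n = 1) (hb : b ^ 2 = 1) (hab : (a * b) ^ 2 = 1) :
    DihedralGroup n →* G :=
  MonoidHom.mk' (fun
      | .r i => a ^ i.val
      | .sr i => b * a ^ i.val) <| by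
    have hbb : b * b = 1 := pow_two b ▸ hb
    rintro (i | i) (j | j)
    · exact pow_val_add_of_pow_eq_one ha i j
    · show b * a ^ (j - i).val = a ^ i.val * (b * a ^ j.val)
      rw [pow_val_sub_of_pow_eq_one ha, ← mul_assoc (a ^ i.val), pow_mul_eq_mul_inv_pow hb hab,
        mul_assoc]
    · show b * a ^ (i + j).val = b * a ^ i.val * a ^ j.val
      rw [pow_val_add_of_pow_eq_one ha, mul_assoc]
    · show a ^ (j - i).val = b * a ^ i.val * (b * a ^ j.val)
      rw [pow_val_sub_of_pow_eq_one ha, mul_assoc b, ← mul_assoc (a ^ i.val),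
        pow_mul_eq_mul_inv_pow hb hab, ← mul_assoc, ← mul_assoc, hbb, one_mul]

lemma notMem_zpowers_of_mul_sq_eq_one (hn : 2 < orderOf a) (hb : b ^ 2 = 1)
    (hab : (a * b) ^ 2 = 1) : b ∉ Subgroup.zpowers a := by
  rintro ⟨k, rfl⟩
  have : a ^ 2 = 1 := by rwa [(Commute.zpow_right (Commute.refl a) k).mul_pow, hb, mul_one] at hab
  exact absurd (orderOf_le_of_pow_eq_one two_pos this) (by omega)

lemma injective_dihedralGroupHom [NeZero (orderOf a)] (hn : 2 < orderOf a) (hb : b ^ 2 = 1)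
    (hab : (a * b) ^ 2 = 1) :
    Function.Injective (dihedralGroupHom (pow_orderOf_eq_one a) hb hab) := by
  refine (injective_iff_map_eq_one _).mpr ?_
  rintro (i | i) h
  · have hdvd : orderOf a ∣ i.val := orderOf_dvd_of_pow_eq_one h
    rw [(ZMod.val_eq_zero i).mp (Nat.eq_zero_of_dvd_of_lt hdvd (ZMod.val_lt i)),
      DihedralGroup.r_zero]
  · refine absurd ⟨-(i.val : ℤ), ?_⟩ (notMem_zpowers_of_mul_sq_eq_one hn hb hab)
    show a ^ (-(i.val : ℤ)) = b
    rw [zpow_neg, zpow_natCast, eq_comm]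
    exact eq_inv_of_mul_eq_one_left h

lemma range_dihedralGroupHom [NeZero n] (hn : n ≠ 1) (ha : a ^ n = 1) (hb : b ^ 2 = 1)
    (hab : (a * b) ^ 2 = 1) : (dihedralGroupHom ha hb hab).range = Subgroup.closure {a, b} := by
  have ha_mem : a ∈ Subgroup.closure {a, b} := Subgroup.subset_closure (by simp)
  have hb_mem : b ∈ Subgroup.closure {a, b} := Subgroup.subset_closure (by simp)
  apply le_antisymm
  · rintro _ ⟨(i | i), rfl⟩
    · exact pow_mem ha_mem _
    · exact mul_mem hb_mem (pow_mem ha_mem _)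
  · rw [Subgroup.closure_le]
    rintro x (rfl | rfl)
    · exact ⟨.r 1, by simp [dihedralGroupHom, ZMod.val_one'' hn]⟩
    · exact ⟨.sr 0, by simp [dihedralGroupHom]⟩

theorem nonempty_closure_pair_mulEquiv_dihedralGroup (hn : 2 < n) (ha : orderOf a = n)
    (hb : b ^ 2 = 1) (hab : (a * b) ^ 2 = 1) :
    Nonempty (Subgroup.closure {a, b} ≃* DihedralGroup n) := by
  subst ha
  have : NeZero (orderOf a) := ⟨by omega⟩
  exact ⟨(MulEquiv.subgroupCongr (range_dihedralGroupHom (by omega) _ hb hab).symm).trans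
    (MonoidHom.ofInjective (injective_dihedralGroupHom hn hb hab)).symm⟩

end DihedralPresentation

open scoped LinearAlgebra.Projectivization Pointwise
open Projectivization MulAction

lemma Projectivization.funCongrLeft_smul_mk {K ι : Type*} [Field K] (σ : Equiv.Perm ι)
    {v : ι → K} (hv : v ≠ 0) :
    LinearEquiv.funCongrLeft K K σ • mk K v hv =
      mk K (v ∘ σ) ((LinearEquiv.funCongrLeft K K σ).map_ne_zero_iff.mpr hv) :=
  smul_mk _ hv

section CoordinatePermutations

variable (K : Type*) [Field K]

def cycleCoords : (Fin 3 → K) ≃ₗ[K] (Fin 3 → K) :=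
  LinearEquiv.funCongrLeft K K (finRotate 3).symm

def swapCoords : (Fin 3 → K) ≃ₗ[K] (Fin 3 → K) :=
  LinearEquiv.funCongrLeft K K (Equiv.swap 0 1)

variable {K}

@[simp] lemma cycleCoords_apply (a b c : K) : cycleCoords K ![a, b, c] = ![c, a, b] := by
  ext i; fin_cases i <;> rfl

@[simp] lemma swapCoords_apply (a b c : K) : swapCoords K ![a, b, c] = ![b, a, c] := by
  ext i; fin_cases i <;> rfl

lemma cycleCoords_pow_three : cycleCoords K ^ 3 = 1 := by
  ext v i; fin_cases i <;> rfl

lemma swapCoords_sq : swapCoords K ^ 2 = 1 := by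
  ext v i; fin_cases i <;> rfl

lemma cycleCoords_mul_swapCoords_sq : (cycleCoords K * swapCoords K) ^ 2 = 1 := by
  ext v i; fin_cases i <;> rfl

lemma cycleCoords_smul_mk {a b c : K} (h : ![a, b, c] ≠ 0) (h' : ![c, a, b] ≠ 0) :
    cycleCoords K • mk K ![a, b, c] h = mk K ![c, a, b] h' := by
  simp [smul_mk, LinearEquiv.smul_def]

lemma swapCoords_smul_mk {a b c : K} (h : ![a, b, c] ≠ 0) (h' : ![b, a, c] ≠ 0) :
    swapCoords K • mk K ![a, b, c] h = mk K ![b, a, c] h' := by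
  simp [smul_mk, LinearEquiv.smul_def]

end CoordinatePermutations

local notation "ℙ²" => ℙ ℝ (Fin 3 → ℝ)
local notation "GL₃" => (Fin 3 → ℝ) ≃ₗ[ℝ] (Fin 3 → ℝ)

namespace W6

lemma mem_iff {p : ℙ² × ℙ²} :
    p ∈ W6 ↔ ∃ (v w : Fin 3 → ℝ) (hv : v ≠ 0) (hw : w ≠ 0),
      p = (mk ℝ v hv, mk ℝ w hw) ∧ ∀ i j, v i * w i = v j * w j := by
  constructor
  · rintro ⟨x₀, x₁, x₂, y₀, y₁, y₂, hx, hy, h₁, h₂, h₀₁, h₁₂⟩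
    refine ⟨_, _, hx, hy, Prod.ext h₁ h₂, fun i j => ?_⟩
    fin_cases i <;> fin_cases j <;> simp <;> linarith
  · rintro ⟨v, w, hv, hw, rfl, h⟩
    obtain ⟨x₀, x₁, x₂, rfl⟩ : ∃ x₀ x₁ x₂, v = ![x₀, x₁, x₂] :=
      ⟨v 0, v 1, v 2, by ext i; fin_cases i <;> rfl⟩
    obtain ⟨y₀, y₁, y₂, rfl⟩ : ∃ y₀ y₁ y₂, w = ![y₀, y₁, y₂] :=
      ⟨w 0, w 1, w 2, by ext i; fin_cases i <;> rfl⟩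
    exact ⟨x₀, x₁, x₂, y₀, y₁, y₂, hv, hw, rfl, rfl, h 0 1, h 1 2⟩

lemma swap_mem {p : ℙ² × ℙ²} (hp : p ∈ W6) : p.swap ∈ W6 := by
  obtain ⟨v, w, hv, hw, rfl, h⟩ := mem_iff.mp hp
  exact mem_iff.mpr ⟨w, v, hw, hv, rfl, fun i j => by rw [mul_comm, h, mul_comm]⟩

lemma funCongrLeft_smul_mem (σ : Equiv.Perm (Fin 3)) {p : ℙ² × ℙ²} (hp : p ∈ W6) :
    LinearEquiv.funCongrLeft ℝ ℝ σ • p ∈ W6 := by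
  obtain ⟨v, w, hv, hw, rfl, h⟩ := mem_iff.mp hp
  exact mem_iff.mpr ⟨_, _, _, _, Prod.ext (funCongrLeft_smul_mk σ hv)
    (funCongrLeft_smul_mk σ hw), fun i j => h (σ i) (σ j)⟩

lemma funCongrLeft_mem_stabilizer (σ : Equiv.Perm (Fin 3)) :
    LinearEquiv.funCongrLeft ℝ ℝ σ ∈ stabilizer GL₃ W6 := by
  refine mem_stabilizer_set.mpr fun p => ⟨fun h => ?_, funCongrLeft_smul_mem σ⟩
  have hinv : LinearEquiv.funCongrLeft ℝ ℝ σ.symm * LinearEquiv.funCongrLeft ℝ ℝ σ = 1 := by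
    ext v i; simp [LinearEquiv.funCongrLeft_apply]
  simpa [← mul_smul, hinv] using funCongrLeft_smul_mem σ.symm h

def swapFactors : Equiv.Perm W6 :=
  Equiv.Perm.subtypePerm (Equiv.prodComm ℙ² ℙ²) fun _ =>
    ⟨fun h => by simpa using swap_mem h, swap_mem⟩

noncomputable def cycle : Equiv.Perm W6 :=
  toPermHom (stabilizer GL₃ W6) W6 ⟨cycleCoords ℝ, funCongrLeft_mem_stabilizer _⟩

noncomputable def transpose : Equiv.Perm W6 :=
  toPermHom (stabilizer GL₃ W6) W6 ⟨swapCoords ℝ, funCongrLeft_mem_stabilizer _⟩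

lemma swapFactors_sq : swapFactors ^ 2 = 1 := Equiv.ext fun _ => rfl

lemma cycle_pow_three : cycle ^ 3 = 1 := by
  rw [cycle, ← map_pow, ← map_one (toPermHom (stabilizer GL₃ W6) W6)]
  exact congrArg _ (Subtype.ext cycleCoords_pow_three)

lemma transpose_sq : transpose ^ 2 = 1 := by
  rw [transpose, ← map_pow, ← map_one (toPermHom (stabilizer GL₃ W6) W6)]
  exact congrArg _ (Subtype.ext swapCoords_sq)

lemma cycle_mul_transpose_sq : (cycle * transpose) ^ 2 = 1 := by
  rw [cycle, transpose, ← map_mul, ← map_pow, ← map_one (toPermHom (stabilizer GL₃ W6) W6)]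
  exact congrArg _ (Subtype.ext cycleCoords_mul_swapCoords_sq)

lemma commute_swapFactors_cycle : Commute swapFactors cycle := Equiv.ext fun _ => rfl

lemma commute_swapFactors_transpose : Commute swapFactors transpose := Equiv.ext fun _ => rfl

noncomputable def basePoint : W6 :=
  ⟨(mk ℝ (![1, 0, 0] : Fin 3 → ℝ) (by simp), mk ℝ (![0, 1, 0] : Fin 3 → ℝ) (by simp)),
    1, 0, 0, 0, 1, 0, _, _, rfl, rfl, by norm_num, by norm_num⟩

lemma ne_one_of_fst_basePoint {f : Equiv.Perm W6}
    (hf : (f basePoint).val.1 = mk ℝ (![0, 1, 0] : Fin 3 → ℝ) (by simp)) : f ≠ 1 := by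
  rintro rfl
  refine (mk_eq_mk_iff_crossProduct_eq_zero _ _).not.mpr ?_ hf
  simp [cross_apply]

lemma orderOf_swapFactors : orderOf swapFactors = 2 :=
  orderOf_eq_prime swapFactors_sq (ne_one_of_fst_basePoint rfl)

lemma orderOf_cycle : orderOf cycle = 3 :=
  orderOf_eq_prime cycle_pow_three (ne_one_of_fst_basePoint (cycleCoords_smul_mk _ _))

lemma orderOf_transpose : orderOf transpose = 2 :=
  orderOf_eq_prime transpose_sq (ne_one_of_fst_basePoint (swapCoords_smul_mk _ _))

lemma orderOf_swapFactors_mul_cycle : orderOf (swapFactors * cycle) = 6 := by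
  rw [commute_swapFactors_cycle.orderOf_mul_eq_mul_orderOf_of_coprime
    (by rw [orderOf_swapFactors, orderOf_cycle]; norm_num), orderOf_swapFactors, orderOf_cycle]

lemma swapFactors_mul_cycle_mul_transpose_sq : (swapFactors * cycle * transpose) ^ 2 = 1 := by
  rw [mul_assoc, (commute_swapFactors_cycle.mul_right commute_swapFactors_transpose).mul_pow,
    swapFactors_sq, cycle_mul_transpose_sq, one_mul]

end W6

open W6 in
/-- The maps `α₁(x,y) = ([y₂:y₀:y₁],[x₂:x₀:x₁])` and `α₂(x,y) = ([x₁:x₀:x₂],[y₁:y₀:y₂])`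
are well-defined bijections of `W`; `α₁` has order exactly `6`, `α₂` has order exactly `2`,
`(α₁α₂)² = id`, and the subgroup of the symmetric group of `W` generated by `α₁` and `α₂`
is isomorphic to the dihedral group `D₆` of order `12`. -/
theorem stmt_4 :
    ∃ α₁ α₂ : Equiv.Perm W6,
      (∀ (x₀ x₁ x₂ y₀ y₁ y₂ : ℝ) (hx : (![x₀, x₁, x₂] : Fin 3 → ℝ) ≠ 0)
          (hy : (![y₀, y₁, y₂] : Fin 3 → ℝ) ≠ 0)
          (hy' : (![y₂, y₀, y₁] : Fin 3 → ℝ) ≠ 0)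
          (hx' : (![x₂, x₀, x₁] : Fin 3 → ℝ) ≠ 0)
          (hmem : (Projectivization.mk ℝ ![x₀, x₁, x₂] hx,
              Projectivization.mk ℝ ![y₀, y₁, y₂] hy) ∈ W6),
        (α₁ ⟨_, hmem⟩).val =
          (Projectivization.mk ℝ ![y₂, y₀, y₁] hy',
            Projectivization.mk ℝ ![x₂, x₀, x₁] hx')) ∧
      (∀ (x₀ x₁ x₂ y₀ y₁ y₂ : ℝ) (hx : (![x₀, x₁, x₂] : Fin 3 → ℝ) ≠ 0)
          (hy : (![y₀, y₁, y₂] : Fin 3 → ℝ) ≠ 0)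
          (hx' : (![x₁, x₀, x₂] : Fin 3 → ℝ) ≠ 0)
          (hy' : (![y₁, y₀, y₂] : Fin 3 → ℝ) ≠ 0)
          (hmem : (Projectivization.mk ℝ ![x₀, x₁, x₂] hx,
              Projectivization.mk ℝ ![y₀, y₁, y₂] hy) ∈ W6),
        (α₂ ⟨_, hmem⟩).val =
          (Projectivization.mk ℝ ![x₁, x₀, x₂] hx',
            Projectivization.mk ℝ ![y₁, y₀, y₂] hy')) ∧
      orderOf α₁ = 6 ∧ orderOf α₂ = 2 ∧ (α₁ * α₂) ^ 2 = 1 ∧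
      Nonempty ((Subgroup.closure {α₁, α₂} : Subgroup (Equiv.Perm W6)) ≃*
        DihedralGroup 6) := by
  refine ⟨swapFactors * cycle, transpose, fun _ _ _ _ _ _ hx hy hy' hx' _ => ?_,
    fun _ _ _ _ _ _ hx hy hx' hy' _ => ?_, orderOf_swapFactors_mul_cycle, orderOf_transpose,
    swapFactors_mul_cycle_mul_transpose_sq, ?_⟩
  · exact Prod.ext (cycleCoords_smul_mk hy hy') (cycleCoords_smul_mk hx hx')
  · exact Prod.ext (swapCoords_smul_mk hx hx') (swapCoords_smul_mk hy hy')
  · exact nonempty_closure_pair_mulEquiv_dihedralGroup (by norm_num)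
      orderOf_swapFactors_mul_cycle transpose_sq swapFactors_mul_cycle_mul_transpose_sq
end

section
/- Let Z₂ = {([w:x:y:z],[u:v]) ∈ ℙ³(ℂ)×ℙ¹(ℂ) : wz = x²+y², uz = vw} and let π: Z₂ → ℙ¹(ℂ) be the projection ([w:x:y:z],[u:v]) ↦ [u:v]. For every [u:v] ∈ ℙ¹(ℂ) with uv ≠ 0, the fibre π⁻¹([u:v]) is in bijection with ℙ¹(ℂ) (it is a smooth conic), while each of the two fibres π⁻¹([1:0]) and π⁻¹([0:1]) is the union of two distinct projective lines meeting in exactly one point. -/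
/-- The surface `Z₂ = {([w:x:y:z],[u:v]) ∈ ℙ³(ℂ) × ℙ¹(ℂ) : wz = x² + y², uz = vw}`. -/
def Z2C : Set (Projectivization ℂ (Fin 4 → ℂ) × Projectivization ℂ (Fin 2 → ℂ)) :=
  {P | ∃ (w x y z u v : ℂ) (h1 : (![w, x, y, z] : Fin 4 → ℂ) ≠ 0)
      (h2 : (![u, v] : Fin 2 → ℂ) ≠ 0),
      P = (Projectivization.mk ℂ ![w, x, y, z] h1, Projectivization.mk ℂ ![u, v] h2) ∧
      w * z = x ^ 2 + y ^ 2 ∧ u * z = v * w}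

/-- A projective line in `ℙ³(ℂ)`: the set of points whose representative lines are contained
in a fixed `2`-dimensional linear subspace of `ℂ⁴`. -/
def IsLine (L : Set (Projectivization ℂ (Fin 4 → ℂ))) : Prop :=
  ∃ W : Submodule ℂ (Fin 4 → ℂ), Module.finrank ℂ W = 2 ∧
    L = {p | p.submodule ≤ W}

/-!
Over a point with `uv ≠ 0` the fibre lies in the plane `uz = vw`, and a linear change of
coordinates on that plane turns `wz = x² + y² = (x + iy)(x - iy)` into `b² = ac`: the fibre is the
image of the conic `{b² = ac} ⊆ ℙ²` under an injective linear map, and the Veronese map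
`[s:t] ↦ [s²:st:t²]` identifies that conic with `ℙ¹`.

Over `[1:0]` (resp. `[0:1]`) the equations become `z = 0` (resp. `w = 0`) and
`(x - iy)(x + iy) = 0`, i.e. the union of the lines spanned by the vertex `e₀` (resp. `e₃`) and
`(0, ±i, 1, 0)`; the three vectors are independent, so the lines are distinct and meet only in
the vertex.
-/

open Projectivization Submodule
open scoped LinearAlgebra.Projectivization

namespace Projectivization

variable {K V : Type*} [Field K] [AddCommGroup V] [Module K V]

lemma mk_submodule_le_iff {W : Submodule K V} {v : V} (hv : v ≠ 0) :
    (mk K v hv).submodule ≤ W ↔ v ∈ W := by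
  rw [submodule_mk, span_singleton_le_iff_mem]

lemma setOf_submodule_le_span_ne {a b c : V} (h : LinearIndependent K ![a, b, c]) :
    {p : ℙ K V | p.submodule ≤ span K {a, b}} ≠ {p | p.submodule ≤ span K {a, c}} := by
  intro hL
  have hb : b ≠ 0 := h.ne_zero 1
  have hmem : mk K b hb ∈ {p : ℙ K V | p.submodule ≤ span K {a, b}} := by
    simp [mem_span_of_mem]
  rw [hL, Set.mem_ofPred, mk_submodule_le_iff] at hmem
  exact h.notMem_span_image (s := {0, 2}) (x := 1) (by decide) (by simpa [Set.image_pair])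

lemma existsUnique_mem_inter_setOf_submodule_le_span {a b c : V}
    (h : LinearIndependent K ![a, b, c]) :
    ∃! q : ℙ K V, q ∈ {p | p.submodule ≤ span K {a, b}} ∩ {p | p.submodule ≤ span K {a, c}} := by
  have ha : a ≠ 0 := h.ne_zero 0
  refine ⟨mk K a ha, by simp [mem_span_of_mem], ?_⟩
  rintro q ⟨hb, hc⟩
  induction q using ind with | h x hx =>
  rw [Set.mem_ofPred, mk_submodule_le_iff, mem_span_pair] at hb hc
  obtain ⟨s, t, rfl⟩ := hb
  obtain ⟨s', t', hst⟩ := hc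
  have ht : t = 0 := by
    have := Fintype.linearIndependent_iff.mp h ![s - s', t, -t']
      (by simp [Fin.sum_univ_three]; linear_combination (norm := module) -hst)
    simpa using this 1
  exact (mk_eq_mk_iff' K _ _ _ _).mpr ⟨s, by simp [ht]⟩

end Projectivization

open Complex

lemma apply_zero_ne_zero_or_apply_one_ne_zero {K : Type*} [Zero K] {p : Fin 2 → K} (hp : p ≠ 0) :
    p 0 ≠ 0 ∨ p 1 ≠ 0 := by
  simpa [Fin.exists_fin_two] using Function.ne_iff.mp hp

lemma isLine_setOf_submodule_le_span {a b : Fin 4 → ℂ} (h : LinearIndependent ℂ ![a, b]) :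
    IsLine {p | p.submodule ≤ span ℂ {a, b}} :=
  ⟨_, by rw [← Matrix.range_cons_cons_empty a b ![], finrank_span_eq_card h, Fintype.card_fin],
    rfl⟩

lemma exists_isLine_pair_of_linearIndependent {S : Set (ℙ ℂ (Fin 4 → ℂ))} {a b c : Fin 4 → ℂ}
    (h : LinearIndependent ℂ ![a, b, c])
    (hS : ∀ p (hp : p ≠ 0), mk ℂ p hp ∈ S ↔ p ∈ span ℂ {a, b} ∨ p ∈ span ℂ {a, c}) :
    ∃ L₁ L₂ : Set (ℙ ℂ (Fin 4 → ℂ)), IsLine L₁ ∧ IsLine L₂ ∧ L₁ ≠ L₂ ∧ S = L₁ ∪ L₂ ∧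
      ∃! q, q ∈ L₁ ∩ L₂ := by
  have hab : LinearIndependent ℂ ![a, b] := by
    convert h.comp ![0, 1] (by decide) using 1; ext i; fin_cases i <;> rfl
  have hac : LinearIndependent ℂ ![a, c] := by
    convert h.comp ![0, 2] (by decide) using 1; ext i; fin_cases i <;> rfl
  refine ⟨_, _, isLine_setOf_submodule_le_span hab, isLine_setOf_submodule_le_span hac,
    setOf_submodule_le_span_ne h, ?_, existsUnique_mem_inter_setOf_submodule_le_span h⟩
  ext q
  induction q using ind with | h p hp =>
  simp [hS]

lemma mk_mem_Z2C_iff {p : Fin 4 → ℂ} (hp : p ≠ 0) {u v : ℂ} (h2 : ![u, v] ≠ 0) :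
    (mk ℂ p hp, mk ℂ ![u, v] h2) ∈ Z2C ↔ p 0 * p 3 = p 1 ^ 2 + p 2 ^ 2 ∧ u * p 3 = v * p 0 := by
  constructor
  · rintro ⟨w, x, y, z, u', v', h1, h2', hP, e1, e2⟩
    obtain ⟨hp', huv⟩ := Prod.ext_iff.mp hP
    obtain ⟨a, rfl⟩ := (mk_eq_mk_iff _ _ _ _ _).mp hp'
    obtain ⟨b, hb⟩ := (mk_eq_mk_iff _ _ _ _ _).mp huv
    have hu : b * u' = u := by simpa [Units.smul_def] using congrFun hb 0
    have hv : b * v' = v := by simpa [Units.smul_def] using congrFun hb 1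
    simp only [Units.smul_def, Pi.smul_apply, smul_eq_mul, Matrix.cons_val]
    constructor
    · linear_combination (a : ℂ) ^ 2 * e1
    · linear_combination (a * b : ℂ) * e2 - a * z * hu + a * w * hv
  · rintro ⟨e1, e2⟩
    have hp4 : ![p 0, p 1, p 2, p 3] = p := by ext i; fin_cases i <;> rfl
    exact ⟨p 0, p 1, p 2, p 3, u, v, hp4 ▸ hp, h2, by simp [hp4], e1, e2⟩

lemma Complex.sq_add_sq_eq_zero_iff (x y : ℂ) : x ^ 2 + y ^ 2 = 0 ↔ x = I * y ∨ x = -I * y := by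
  have : x ^ 2 + y ^ 2 = (x - I * y) * (x + I * y) := by linear_combination y ^ 2 * I_sq
  rw [this, mul_eq_zero, sub_eq_zero, add_eq_zero_iff_eq_neg, neg_mul]

section Vertex

/- `![u, 0, 0, v]` spans the vertex of the fibre over `[u:v]` when `uv = 0`. -/

variable {K : Type*} [Field K] {u v : K}

lemma mem_span_pair_vertex_iff (h2 : ![u, v] ≠ 0) (c : K) (p : Fin 4 → K) :
    p ∈ span K {![u, 0, 0, v], ![0, c, 1, 0]} ↔ p 1 = c * p 2 ∧ v * p 0 = u * p 3 := by
  rw [mem_span_pair]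
  constructor
  · rintro ⟨s, t, rfl⟩
    simp only [Pi.add_apply, Pi.smul_apply, smul_eq_mul, Matrix.cons_val]
    constructor <;> ring
  · rintro ⟨h1, h03⟩
    obtain hu | hv : u ≠ 0 ∨ v ≠ 0 := apply_zero_ne_zero_or_apply_one_ne_zero h2
    · have h3 : p 0 / u * v = p 3 := by field_simp; linear_combination h03
      refine ⟨p 0 / u, p 2, ?_⟩
      ext i; fin_cases i <;> simp [h1, h3, mul_div_cancel₀ _ hu, mul_comm]
    · have h0 : p 3 / v * u = p 0 := by field_simp; linear_combination -h03
      refine ⟨p 3 / v, p 2, ?_⟩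
      ext i; fin_cases i <;> simp [h1, h0, mul_div_cancel₀ _ hv, mul_comm]

lemma linearIndependent_vertex_pair (h2 : ![u, v] ≠ 0) {c c' : K} (hc : c ≠ c') :
    LinearIndependent K ![![u, 0, 0, v], ![0, c, 1, 0], ![0, c', 1, 0]] := by
  rw [Fintype.linearIndependent_iff]
  intro g hg
  have e0 := congrFun hg 0
  have e1 := congrFun hg 1
  have e2 := congrFun hg 2
  have e3 := congrFun hg 3
  simp [Fin.sum_univ_three] at e0 e1 e2 e3
  have hg0 : g 0 = 0 := by
    obtain hu | hv : u ≠ 0 ∨ v ≠ 0 := apply_zero_ne_zero_or_apply_one_ne_zero h2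
    exacts [e0.resolve_right hu, e3.resolve_right hv]
  have hg1 : g 1 = 0 := by
    have : (c - c') * g 1 = 0 := by linear_combination e1 - c' * e2
    exact (mul_eq_zero.mp this).resolve_left (sub_ne_zero.mpr hc)
  intro i
  fin_cases i
  exacts [hg0, hg1, by simpa [hg1] using e2]

end Vertex

lemma exists_isLine_pair_fiber_of_mul_eq_zero {u v : ℂ} (h2 : ![u, v] ≠ 0) (huv : u * v = 0) :
    ∃ L₁ L₂ : Set (ℙ ℂ (Fin 4 → ℂ)), IsLine L₁ ∧ IsLine L₂ ∧ L₁ ≠ L₂ ∧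
      {q | (q, mk ℂ ![u, v] h2) ∈ Z2C} = L₁ ∪ L₂ ∧ ∃! q, q ∈ L₁ ∩ L₂ := by
  have hI : I ≠ -I := by simp [eq_neg_iff_add_eq_zero, ← two_mul, I_ne_zero]
  refine exists_isLine_pair_of_linearIndependent (linearIndependent_vertex_pair h2 hI)
    fun p hp => ?_
  have hvertex : u * p 3 = v * p 0 → p 0 * p 3 = 0 := by
    intro h
    obtain hu | hv : u ≠ 0 ∨ v ≠ 0 := apply_zero_ne_zero_or_apply_one_ne_zero h2
    · have hp3 : p 3 = 0 := by simpa [(mul_eq_zero.mp huv).resolve_left hu, hu] using h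
      simp [hp3]
    · have hp0 : p 0 = 0 := by simpa [(mul_eq_zero.mp huv).resolve_right hv, hv] using h
      simp [hp0]
  rw [Set.mem_ofPred, mk_mem_Z2C_iff, mem_span_pair_vertex_iff h2, mem_span_pair_vertex_iff h2,
    ← or_and_right, ← sq_add_sq_eq_zero_iff, eq_comm (a := v * p 0)]
  constructor
  · rintro ⟨e1, e2⟩
    exact ⟨by rw [← e1, hvertex e2], e2⟩
  · rintro ⟨e1, e2⟩
    exact ⟨by rw [hvertex e2, e1], e2⟩

section Veronese

variable {K : Type*} [Field K]

def veroneseVec (p : Fin 2 → K) : Fin 3 → K := ![p 0 ^ 2, p 0 * p 1, p 1 ^ 2]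

lemma veroneseVec_ne_zero {p : Fin 2 → K} (hp : p ≠ 0) : veroneseVec p ≠ 0 := by
  intro h
  apply hp
  ext i
  fin_cases i
  · simpa [veroneseVec] using congrFun h 0
  · simpa [veroneseVec] using congrFun h 2

lemma veroneseVec_smul (c : K) (p : Fin 2 → K) : veroneseVec (c • p) = c ^ 2 • veroneseVec p := by
  ext i; fin_cases i <;> simp [veroneseVec] <;> ring

def veronese : ℙ K (Fin 2 → K) → ℙ K (Fin 3 → K) :=
  Projectivization.lift (fun p => mk K (veroneseVec p.1) (veroneseVec_ne_zero p.2))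
    (by
      rintro ⟨-, ha⟩ ⟨b, hb⟩ t rfl
      exact (mk_eq_mk_iff' K _ _ _ _).mpr ⟨t ^ 2, (veroneseVec_smul t b).symm⟩)

lemma veronese_mk {p : Fin 2 → K} (hp : p ≠ 0) :
    veronese (mk K p hp) = mk K (veroneseVec p) (veroneseVec_ne_zero hp) := rfl

lemma veronese_injective : Function.Injective (veronese (K := K)) := by
  intro p q hpq
  induction p using ind with | h s hs =>
  induction q using ind with | h t ht =>
  rw [veronese_mk, veronese_mk, mk_eq_mk_iff'] at hpq
  obtain ⟨μ, hμ⟩ := hpq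
  have e0 : μ * t 0 ^ 2 = s 0 ^ 2 := by simpa [veroneseVec] using congrFun hμ 0
  have e1 : μ * (t 0 * t 1) = s 0 * s 1 := by simpa [veroneseVec] using congrFun hμ 1
  have e2 : μ * t 1 ^ 2 = s 1 ^ 2 := by simpa [veroneseVec] using congrFun hμ 2
  rw [mk_eq_mk_iff']
  obtain hs0 | hs1 := apply_zero_ne_zero_or_apply_one_ne_zero hs
  · refine ⟨μ * t 0 / s 0, ?_⟩
    ext i; fin_cases i <;> simp <;> field_simp
    · linear_combination e0
    · linear_combination e1
  · refine ⟨μ * t 1 / s 1, ?_⟩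
    ext i; fin_cases i <;> simp <;> field_simp
    · linear_combination e1
    · linear_combination e2

lemma mk_mem_range_veronese_iff {a : Fin 3 → K} (ha : a ≠ 0) :
    mk K a ha ∈ Set.range veronese ↔ a 0 * a 2 = a 1 ^ 2 := by
  constructor
  · rintro ⟨q, hq⟩
    induction q using ind with | h s hs =>
    rw [veronese_mk, eq_comm, mk_eq_mk_iff] at hq
    obtain ⟨μ, rfl⟩ := hq
    simp [veroneseVec, Units.smul_def]
    ring
  · intro h
    have h02 : a 0 ≠ 0 ∨ a 2 ≠ 0 := by
      by_contra! h0
      apply ha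
      ext i
      fin_cases i
      · exact h0.1
      · simpa [h0.1, eq_comm (a := (0 : K))] using h
      · exact h0.2
    obtain h0 | h2 := h02
    · refine ⟨mk K ![a 0, a 1] fun h' => h0 (by simpa using congrFun h' 0), ?_⟩
      rw [veronese_mk, mk_eq_mk_iff']
      refine ⟨a 0, ?_⟩
      ext i; fin_cases i <;> simp [veroneseVec, ← h, sq]
    · refine ⟨mk K ![a 1, a 2] fun h' => h2 (by simpa using congrFun h' 1), ?_⟩
      rw [veronese_mk, mk_eq_mk_iff']
      refine ⟨a 2, ?_⟩
      ext i; fin_cases i <;> simp [veroneseVec, ← h, sq] <;> ring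

end Veronese

section SmoothFiber

variable {u v : ℂ}

/- `(a, b, c) ↦ (w, x, y, z)` with `w = 2ub`, `z = 2vb`, `x + iy = 2va`, `x - iy = 2uc`, so that
`wz - x² - y² = 4uv (b² - ac)`; its image is the plane `uz = vw`. -/
noncomputable def conicEmbedding (u v : ℂ) : (Fin 3 → ℂ) →ₗ[ℂ] (Fin 4 → ℂ) where
  toFun a := ![2 * u * a 1, v * a 0 + u * a 2, I * (u * a 2 - v * a 0), 2 * v * a 1]
  map_add' a b := by ext i; fin_cases i <;> simp <;> ring
  map_smul' c a := by ext i; fin_cases i <;> simp <;> ring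

lemma conicEmbedding_injective (hu : u ≠ 0) (hv : v ≠ 0) :
    Function.Injective (conicEmbedding u v) := by
  rw [injective_iff_map_eq_zero]
  intro a ha
  have e0 := congrFun ha 0
  have e1 := congrFun ha 1
  have e2 := congrFun ha 2
  simp [conicEmbedding] at e0 e1 e2
  have h0 : v * a 0 = 0 := by linear_combination (e1 - e2) / 2
  have h2 : u * a 2 = 0 := by linear_combination (e1 + e2) / 2
  ext i
  fin_cases i
  · simpa [hv] using h0
  · simpa using e0.resolve_left hu
  · simpa [hu] using h2

lemma exists_conicEmbedding_eq (hu : u ≠ 0) (hv : v ≠ 0) {p : Fin 4 → ℂ}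
    (hp : u * p 3 = v * p 0) : ∃ a, conicEmbedding u v a = p := by
  refine ⟨![(p 1 + I * p 2) / (2 * v), p 0 / (2 * u), (p 1 - I * p 2) / (2 * u)], ?_⟩
  ext i; fin_cases i <;> simp [conicEmbedding] <;> field_simp
  · ring
  · linear_combination (-2 * p 2) * I_sq
  · exact hp.symm

lemma mk_conicEmbedding_mem_Z2C_iff (hu : u ≠ 0) (hv : v ≠ 0) {a : Fin 3 → ℂ}
    (ha : conicEmbedding u v a ≠ 0) (h2 : ![u, v] ≠ 0) :
    (mk ℂ (conicEmbedding u v a) ha, mk ℂ ![u, v] h2) ∈ Z2C ↔ a 0 * a 2 = a 1 ^ 2 := by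
  rw [mk_mem_Z2C_iff]
  simp only [conicEmbedding, LinearMap.coe_mk, AddHom.coe_mk, Matrix.cons_val]
  have hsum :
      (v * a 0 + u * a 2) ^ 2 + (I * (u * a 2 - v * a 0)) ^ 2 = 4 * u * v * (a 0 * a 2) := by
    linear_combination (u * a 2 - v * a 0) ^ 2 * I_sq
  have h4uv : (4 * u * v : ℂ) ≠ 0 := by simp [hu, hv]
  rw [hsum]
  constructor
  · rintro ⟨h, -⟩
    apply mul_left_cancel₀ h4uv
    linear_combination -h
  · intro h
    exact ⟨by linear_combination -(4 * u * v) * h, by ring⟩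

lemma fiber_eq_image_range_veronese (hu : u ≠ 0) (hv : v ≠ 0) (h2 : ![u, v] ≠ 0) :
    {q | (q, mk ℂ ![u, v] h2) ∈ Z2C} =
      map (conicEmbedding u v) (conicEmbedding_injective hu hv) '' Set.range veronese := by
  ext q
  constructor
  · intro hq
    induction q using ind with | h p hp =>
    obtain ⟨a, rfl⟩ := exists_conicEmbedding_eq hu hv ((mk_mem_Z2C_iff hp h2).mp hq).2
    have ha : a ≠ 0 := by rintro rfl; exact hp (map_zero _)
    exact ⟨mk ℂ a ha,
      (mk_mem_range_veronese_iff ha).mpr ((mk_conicEmbedding_mem_Z2C_iff hu hv hp h2).mp hq), rfl⟩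
  · rintro ⟨r, hr, rfl⟩
    induction r using ind with | h a ha =>
    rw [map_mk, Set.mem_ofPred, mk_conicEmbedding_mem_Z2C_iff hu hv]
    exact (mk_mem_range_veronese_iff ha).mp hr

lemma nonempty_fiber_equiv_of_mul_ne_zero {u v : ℂ} (h2 : ![u, v] ≠ 0) (huv : u * v ≠ 0) :
    Nonempty ({q | (q, mk ℂ ![u, v] h2) ∈ Z2C} ≃ ℙ ℂ (Fin 2 → ℂ)) := by
  obtain ⟨hu, hv⟩ := mul_ne_zero_iff.mp huv
  rw [fiber_eq_image_range_veronese hu hv h2]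
  exact ⟨(Equiv.Set.image _ _ (map_injective _ _)).symm.trans
    (Equiv.ofInjective _ veronese_injective).symm⟩

end SmoothFiber

/-- For the projection `π : Z₂ → ℙ¹`, `([w:x:y:z],[u:v]) ↦ [u:v]`: every fibre over a point
`[u:v]` with `uv ≠ 0` is in bijection with `ℙ¹(ℂ)`, while each of the two fibres over `[1:0]`
and `[0:1]` is the union of two distinct projective lines meeting in exactly one point. -/
theorem stmt_15 :
    (∀ (u v : ℂ) (h2 : (![u, v] : Fin 2 → ℂ) ≠ 0), u * v ≠ 0 →
      Nonempty ({q : Projectivization ℂ (Fin 4 → ℂ) |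
        (q, Projectivization.mk ℂ ![u, v] h2) ∈ Z2C} ≃ Projectivization ℂ (Fin 2 → ℂ))) ∧
    (∀ h : (![1, 0] : Fin 2 → ℂ) ≠ 0,
      ∃ L₁ L₂ : Set (Projectivization ℂ (Fin 4 → ℂ)), IsLine L₁ ∧ IsLine L₂ ∧ L₁ ≠ L₂ ∧
        {q | (q, Projectivization.mk ℂ ![1, 0] h) ∈ Z2C} = L₁ ∪ L₂ ∧
        (∃! q, q ∈ L₁ ∩ L₂)) ∧
    (∀ h : (![0, 1] : Fin 2 → ℂ) ≠ 0,
      ∃ L₁ L₂ : Set (Projectivization ℂ (Fin 4 → ℂ)), IsLine L₁ ∧ IsLine L₂ ∧ L₁ ≠ L₂ ∧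
        {q | (q, Projectivization.mk ℂ ![0, 1] h) ∈ Z2C} = L₁ ∪ L₂ ∧
        (∃! q, q ∈ L₁ ∩ L₂)) :=
  ⟨fun _ _ h2 huv => nonempty_fiber_equiv_of_mul_ne_zero h2 huv,
    fun h => exists_isLine_pair_fiber_of_mul_eq_zero h (by simp),
    fun h => exists_isLine_pair_fiber_of_mul_eq_zero h (by simp)⟩
end
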